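/- Suppose N·ρ_W^{T_S} ≤ 1/2 (which holds whenever T_S ≥ log(2N)/(−log ρ_W)). Let V_1,…,V_N be real matrices, not all zero, with V_i ∈ ℝ^{m_i×n_i}. Set q_i(0) := ‖V_i‖_F², q(t) := W^t q(0), D_i⁰ := V_i/√(∑_{j=1}^N ‖V_j‖_F²) and D_i := V_i/√(N·q_i(T_S)). Then q_i(T_S) > 0 for every i, ‖D_i − D_i⁰‖_F ≤ N·ρ_W^{T_S}·‖D_i⁰‖_F for every i = 1,…,N, and ∑_{i=1}^N ‖D_i‖_F² ≤ (1 + N·ρ_W^{T_S})². -/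
import Mathlib

open Matrix
open scoped ENNReal NNReal

noncomputable section

/-- Spectral (ℓ² operator) norm of a real matrix. -/
noncomputable def spNorm {α β : Type*} [Fintype α] [Fintype β] [DecidableEq β]
    (A : Matrix α β ℝ) : ℝ :=
  ‖LinearMap.toContinuousLinearMap (Matrix.toEuclideanLin A)‖

/-- Frobenius norm of a real matrix. -/
noncomputable def frobNorm {α β : Type*} [Fintype α] [Fintype β] (A : Matrix α β ℝ) : ℝ :=
  Real.sqrt (∑ i, ∑ j, (A i j) ^ 2)

section sp
open scoped Matrix.Norms.L2Operator
variable {n : ℕ}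

lemma spNorm_eq_norm (A : Matrix (Fin n) (Fin n) ℝ) : spNorm A = ‖A‖ := rfl

lemma spNorm_nonneg (A : Matrix (Fin n) (Fin n) ℝ) : 0 ≤ spNorm A := by
  rw [spNorm_eq_norm]; exact norm_nonneg _

lemma spNorm_pow_le (A : Matrix (Fin n) (Fin n) ℝ) (t : ℕ) :
    spNorm (A ^ (t+1)) ≤ spNorm A ^ (t+1) := by
  induction t with
  | zero => simp
  | succ t ih =>
    calc spNorm (A ^ (t+2)) = ‖A ^ (t+1) * A‖ := by rw [spNorm_eq_norm, pow_succ]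
      _ ≤ ‖A ^ (t+1)‖ * ‖A‖ := Matrix.l2_opNorm_mul _ _
      _ ≤ spNorm A ^ (t+1) * spNorm A :=
          mul_le_mul ih le_rfl (norm_nonneg _) (pow_nonneg (spNorm_nonneg A) _)
      _ = spNorm A ^ (t+2) := (pow_succ _ _).symm

lemma mulVec_entry_le (A : Matrix (Fin n) (Fin n) ℝ) (x : Fin n → ℝ) (i : Fin n) :
    |(A *ᵥ x) i| ≤ spNorm A * Real.sqrt (∑ j, (x j)^2) := by
  set xe : EuclideanSpace ℝ (Fin n) := (WithLp.equiv 2 _).symm x with hxe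
  have h := Matrix.l2_opNorm_mulVec A xe
  have h1 : ‖xe‖ = Real.sqrt (∑ j, (x j)^2) := by
    rw [EuclideanSpace.norm_eq]
    congr 1
    refine Finset.sum_congr rfl fun j _ => ?_
    simp [hxe, Real.norm_eq_abs, sq_abs]
  have h2 : |(A *ᵥ x) i| ≤ ‖(EuclideanSpace.equiv (Fin n) ℝ).symm (A *ᵥ xe)‖ := by
    rw [EuclideanSpace.norm_eq, ← Real.sqrt_sq_eq_abs]
    apply Real.sqrt_le_sqrt
    have heq : ((A *ᵥ x) i)^2 = ‖((EuclideanSpace.equiv (Fin n) ℝ).symm (A *ᵥ xe)) i‖^2 := by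
      simp only [Real.norm_eq_abs, sq_abs]
      rfl
    rw [heq]
    exact Finset.single_le_sum
      (f := fun j => ‖((EuclideanSpace.equiv (Fin n) ℝ).symm (A *ᵥ xe)) j‖^2)
      (fun j _ => sq_nonneg _) (Finset.mem_univ i)
  rw [spNorm_eq_norm, ← h1]
  exact le_trans h2 h
end sp

lemma frobNorm_nonneg' {α β : Type*} [Fintype α] [Fintype β] (A : Matrix α β ℝ) :
    0 ≤ frobNorm A := Real.sqrt_nonneg _

lemma frobNorm_smul' {α β : Type*} [Fintype α] [Fintype β] (c : ℝ) (A : Matrix α β ℝ) :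
    frobNorm (c • A) = |c| * frobNorm A := by
  unfold frobNorm
  have h : ∑ i, ∑ j, ((c • A) i j) ^ 2 = c ^ 2 * ∑ i, ∑ j, (A i j) ^ 2 := by
    simp only [Matrix.smul_apply, smul_eq_mul, mul_pow, Finset.mul_sum]
  rw [h, Real.sqrt_mul (sq_nonneg c), Real.sqrt_sq_eq_abs]

lemma frobNorm_pos' {α β : Type*} [Fintype α] [Fintype β] {A : Matrix α β ℝ} (hA : A ≠ 0) :
    0 < frobNorm A := by
  apply Real.sqrt_pos.mpr
  obtain ⟨i, j, hij⟩ : ∃ i j, A i j ≠ 0 := by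
    by_contra h
    push_neg at h
    exact hA (by ext i j; exact h i j)
  apply Finset.sum_pos' (fun i _ => Finset.sum_nonneg fun j _ => sq_nonneg _)
  exact ⟨i, Finset.mem_univ i, Finset.sum_pos'
    (fun j _ => sq_nonneg _) ⟨j, Finset.mem_univ j, by positivity⟩⟩

lemma inv_sqrt_est (s x ε : ℝ) (hs : 0 < s) (hε : 0 ≤ ε) (hε2 : ε ≤ 1/2)
    (hx : |x - s| ≤ ε * s) :
    |(Real.sqrt x)⁻¹ - (Real.sqrt s)⁻¹| ≤ ε * (Real.sqrt s)⁻¹ := by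
  obtain ⟨hx1, hx2⟩ := abs_le.mp hx
  have hxpos : s / 2 ≤ x := by nlinarith
  set u := Real.sqrt x with hu'
  set v := Real.sqrt s with hv'
  have hu : 0 < u := Real.sqrt_pos.mpr (by linarith)
  have hv : 0 < v := Real.sqrt_pos.mpr hs
  have hu2 : u ^ 2 = x := Real.sq_sqrt (by linarith)
  have hv2 : v ^ 2 = s := Real.sq_sqrt hs.le
  have h2u : v ≤ 2 * u := by nlinarith
  have h1 : |v - u| * (u + v) ≤ ε * s := by
    calc |v - u| * (u + v) = |v - u| * |u + v| := by
          rw [abs_of_pos (by linarith : (0:ℝ) < u + v)]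
      _ = |(v - u) * (u + v)| := (abs_mul _ _).symm
      _ = |x - s| := by rw [show (v - u) * (u + v) = v^2 - u^2 from by ring, hu2, hv2,
            abs_sub_comm]
      _ ≤ ε * s := hx
  have hcore : v ^ 2 ≤ u ^ 2 + u * v := by
    nlinarith [mul_le_mul_of_nonneg_left h2u hv.le]
  have h2 : ε * s ≤ ε * u * (u + v) := by
    nlinarith [mul_le_mul_of_nonneg_left hcore hε]
  have h3 : |v - u| ≤ ε * u :=
    le_of_mul_le_mul_right (le_trans h1 h2 |>.trans_eq (by ring)) (by linarith)
  have h4 : u⁻¹ - v⁻¹ = (v - u) / (u * v) := by field_simp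
  rw [h4, abs_div, abs_of_pos (mul_pos hu hv), div_le_iff₀ (mul_pos hu hv),
    show ε * v⁻¹ * (u * v) = ε * u * (v⁻¹ * v) from by ring, inv_mul_cancel₀ hv.ne', mul_one]
  exact h3

lemma ds_pow_sub (N : ℕ) (hN : 0 < N) (W : Matrix (Fin N) (Fin N) ℝ)
    (hWrow : ∀ i, ∑ j, W i j = 1) (hWcol : ∀ j, ∑ i, W i j = 1) (t : ℕ) :
    (W - (N : ℝ)⁻¹ • Matrix.of (fun _ _ => (1 : ℝ))) ^ (t + 1)
      = W ^ (t + 1) - (N : ℝ)⁻¹ • Matrix.of (fun _ _ => (1 : ℝ)) := by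
  set J : Matrix (Fin N) (Fin N) ℝ := Matrix.of (fun _ _ => (1 : ℝ)) with hJ
  have hNne : (N : ℝ) ≠ 0 := Nat.cast_ne_zero.mpr hN.ne'
  have hWJ : W * J = J := by
    ext i j; simp [hJ, Matrix.mul_apply, hWrow i]
  have hJW : J * W = J := by
    ext i j; simp [hJ, Matrix.mul_apply, hWcol j]
  have hJJ : J * J = (N : ℝ) • J := by
    ext i j; simp [hJ, Matrix.mul_apply]
  have hWtJ : ∀ s : ℕ, W ^ s * J = J := by
    intro s
    induction s with
    | zero => simp
    | succ s ih => rw [pow_succ, mul_assoc, hWJ, ih]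
  induction t with
  | zero => simp
  | succ t ih =>
    have expand : (W ^ (t+1) - (N : ℝ)⁻¹ • J) * (W - (N : ℝ)⁻¹ • J)
        = W ^ (t+1) * W - (N : ℝ)⁻¹ • (W ^ (t+1) * J) - (N : ℝ)⁻¹ • (J * W)
          + ((N : ℝ)⁻¹ * (N : ℝ)⁻¹) • (J * J) := by
      rw [Matrix.sub_mul, Matrix.mul_sub, Matrix.mul_sub, Matrix.smul_mul, Matrix.mul_smul,
        Matrix.smul_mul, Matrix.mul_smul, smul_smul]
      abel
    have hc : (N : ℝ)⁻¹ * (N : ℝ)⁻¹ * (N : ℝ) = (N : ℝ)⁻¹ := by field_simp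
    rw [pow_succ, ih, expand, hWtJ, hJW, hJJ, smul_smul, hc, ← pow_succ]
    abel

/-- error bounds of the distributed sampling subroutine. -/
theorem stmt3
    (N : ℕ) (hN : 0 < N)
    (W : Matrix (Fin N) (Fin N) ℝ)
    (hWnn : ∀ i j, 0 ≤ W i j)
    (hWrow : ∀ i, ∑ j, W i j = 1) (hWcol : ∀ j, ∑ i, W i j = 1)
    (ρW : ℝ) (hρW : ρW = spNorm (W - (N : ℝ)⁻¹ • Matrix.of (fun _ _ => (1 : ℝ))))
    (hρlt : ρW < 1)
    (TS : ℕ) (hTS : (N : ℝ) * ρW ^ TS ≤ 1 / 2)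
    (md nd : Fin N → ℕ)
    (V : (i : Fin N) → Matrix (Fin (md i)) (Fin (nd i)) ℝ)
    (hV : ∃ i, V i ≠ 0)
    (q0 : Fin N → ℝ) (hq0 : q0 = fun i => (frobNorm (V i)) ^ 2)
    (q : ℕ → Fin N → ℝ) (hq : ∀ t, q t = (W ^ t).mulVec q0)
    (D0 : (i : Fin N) → Matrix (Fin (md i)) (Fin (nd i)) ℝ)
    (hD0 : D0 = fun i => (Real.sqrt (∑ j, (frobNorm (V j)) ^ 2))⁻¹ • V i)
    (D : (i : Fin N) → Matrix (Fin (md i)) (Fin (nd i)) ℝ)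
    (hD : D = fun i => (Real.sqrt ((N : ℝ) * q TS i))⁻¹ • V i) :
    (∀ i, 0 < q TS i) ∧
    (∀ i, frobNorm (D i - D0 i) ≤ (N : ℝ) * ρW ^ TS * frobNorm (D0 i)) ∧
    (∑ i, (frobNorm (D i)) ^ 2 ≤ (1 + (N : ℝ) * ρW ^ TS) ^ 2) := by
  have hN1 : (1 : ℝ) ≤ (N : ℝ) := Nat.one_le_cast.mpr hN
  have hNpos : (0 : ℝ) < (N : ℝ) := by linarith
  set S : ℝ := ∑ j, (frobNorm (V j)) ^ 2 with hS
  have hS0 : 0 < S := by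
    obtain ⟨i0, hi0⟩ := hV
    refine Finset.sum_pos' (fun j _ => sq_nonneg _) ⟨i0, Finset.mem_univ i0, ?_⟩
    have := frobNorm_pos' hi0
    positivity
  have hρ0 : 0 ≤ ρW := by rw [hρW]; exact spNorm_nonneg _
  -- TS is positive
  obtain ⟨t, rfl⟩ : ∃ t, TS = t + 1 := by
    refine ⟨TS - 1, ?_⟩
    rcases Nat.eq_zero_or_pos TS with h | h
    · exfalso
      rw [h] at hTS
      simp at hTS
      linarith
    · omega
  set ε : ℝ := (N : ℝ) * ρW ^ (t + 1) with hεdef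
  have hε0 : 0 ≤ ε := by positivity
  have hε2 : ε ≤ 1 / 2 := hTS
  have hq0nn : ∀ j, 0 ≤ q0 j := by intro j; rw [hq0]; positivity
  have hq0sum : ∑ j, q0 j = S := by rw [hq0]
  -- the key deviation bound
  have key : ∀ i, |(N : ℝ) * q (t+1) i - S| ≤ ε * S := by
    intro i
    set M : Matrix (Fin N) (Fin N) ℝ :=
      W - (N : ℝ)⁻¹ • Matrix.of (fun _ _ => (1 : ℝ)) with hM
    have hMpow : M ^ (t+1) = W ^ (t+1) - (N : ℝ)⁻¹ • Matrix.of (fun _ _ => (1 : ℝ)) :=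
      ds_pow_sub N hN W hWrow hWcol t
    have hdiff : q (t+1) i - (N : ℝ)⁻¹ * S = ((M ^ (t+1)) *ᵥ q0) i := by
      rw [hMpow, Matrix.sub_mulVec, hq (t+1)]
      have hJv : ((((N : ℝ)⁻¹ • Matrix.of (fun _ _ => (1 : ℝ))) *ᵥ q0) i) = (N : ℝ)⁻¹ * S := by
        simp [Matrix.mulVec, dotProduct, ← Finset.mul_sum, hq0sum]
      simp only [Pi.sub_apply, hJv]
    have hb1 : |((M ^ (t+1)) *ᵥ q0) i| ≤ spNorm (M ^ (t+1)) * Real.sqrt (∑ j, (q0 j)^2) :=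
      mulVec_entry_le _ _ i
    have hb2 : spNorm (M ^ (t+1)) ≤ ρW ^ (t+1) := by
      rw [hρW]
      exact spNorm_pow_le M t
    have hb3 : Real.sqrt (∑ j, (q0 j)^2) ≤ S := by
      have hsum : ∑ j, (q0 j)^2 ≤ S^2 := by
        calc ∑ j, (q0 j)^2 ≤ ∑ j, q0 j * ∑ k, q0 k := by
              refine Finset.sum_le_sum fun j _ => ?_
              have hle : q0 j ≤ ∑ k, q0 k :=
                Finset.single_le_sum (fun k _ => hq0nn k) (Finset.mem_univ j)
              nlinarith [hq0nn j]
          _ = (∑ j, q0 j)^2 := by rw [← Finset.sum_mul]; ring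
          _ = S^2 := by rw [hq0sum]
      calc Real.sqrt (∑ j, (q0 j)^2) ≤ Real.sqrt (S^2) := Real.sqrt_le_sqrt hsum
        _ = S := Real.sqrt_sq hS0.le
    have hb : |q (t+1) i - (N : ℝ)⁻¹ * S| ≤ ρW ^ (t+1) * S := by
      rw [hdiff]
      calc |((M ^ (t+1)) *ᵥ q0) i| ≤ spNorm (M ^ (t+1)) * Real.sqrt (∑ j, (q0 j)^2) := hb1
        _ ≤ ρW ^ (t+1) * S :=
            mul_le_mul hb2 hb3 (Real.sqrt_nonneg _) (pow_nonneg hρ0 _)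
    have hrw : (N : ℝ) * q (t+1) i - S = (N : ℝ) * (q (t+1) i - (N : ℝ)⁻¹ * S) := by
      field_simp
    rw [hrw, abs_mul, abs_of_pos hNpos, hεdef]
    calc (N : ℝ) * |q (t+1) i - (N : ℝ)⁻¹ * S| ≤ (N : ℝ) * (ρW ^ (t+1) * S) :=
          mul_le_mul_of_nonneg_left hb hNpos.le
      _ = (N : ℝ) * ρW ^ (t+1) * S := by ring
  -- part 1
  have part1 : ∀ i, 0 < q (t+1) i := by
    intro i
    have h := (abs_le.mp (key i)).1
    have hεS : ε * S ≤ S / 2 := by nlinarith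
    by_contra hc
    push_neg at hc
    have : (N : ℝ) * q (t+1) i ≤ 0 := mul_nonpos_of_nonneg_of_nonpos hNpos.le hc
    linarith
  have hest : ∀ i, |(Real.sqrt ((N : ℝ) * q (t+1) i))⁻¹ - (Real.sqrt S)⁻¹|
      ≤ ε * (Real.sqrt S)⁻¹ := by
    intro i
    exact inv_sqrt_est S ((N : ℝ) * q (t+1) i) ε hS0 hε0 hε2 (key i)
  have hvpos : 0 < Real.sqrt S := Real.sqrt_pos.mpr hS0
  refine ⟨part1, ?_, ?_⟩
  -- part 2
  · intro i
    have hDsub : D i - D0 i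
        = ((Real.sqrt ((N : ℝ) * q (t+1) i))⁻¹ - (Real.sqrt S)⁻¹) • V i := by
      rw [hD, hD0]
      simp only
      rw [sub_smul]
    have hD0i : frobNorm (D0 i) = (Real.sqrt S)⁻¹ * frobNorm (V i) := by
      rw [hD0]
      simp only
      rw [frobNorm_smul', abs_of_nonneg (inv_nonneg.mpr hvpos.le)]
    rw [hDsub, frobNorm_smul', hD0i]
    calc |(Real.sqrt ((N : ℝ) * q (t+1) i))⁻¹ - (Real.sqrt S)⁻¹| * frobNorm (V i)
        ≤ (ε * (Real.sqrt S)⁻¹) * frobNorm (V i) :=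
          mul_le_mul_of_nonneg_right (hest i) (frobNorm_nonneg' _)
      _ = ε * ((Real.sqrt S)⁻¹ * frobNorm (V i)) := by ring
  -- part 3
  · have hDi : ∀ i, frobNorm (D i) ≤ (1 + ε) * ((Real.sqrt S)⁻¹ * frobNorm (V i)) := by
      intro i
      have hDieq : frobNorm (D i)
          = (Real.sqrt ((N : ℝ) * q (t+1) i))⁻¹ * frobNorm (V i) := by
        rw [hD]
        simp only
        rw [frobNorm_smul', abs_of_nonneg (inv_nonneg.mpr (Real.sqrt_nonneg _))]
      have hub : (Real.sqrt ((N : ℝ) * q (t+1) i))⁻¹ ≤ (1 + ε) * (Real.sqrt S)⁻¹ := by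
        have := (abs_le.mp (hest i)).2
        linarith
      rw [hDieq]
      calc (Real.sqrt ((N : ℝ) * q (t+1) i))⁻¹ * frobNorm (V i)
          ≤ ((1 + ε) * (Real.sqrt S)⁻¹) * frobNorm (V i) :=
            mul_le_mul_of_nonneg_right hub (frobNorm_nonneg' _)
        _ = (1 + ε) * ((Real.sqrt S)⁻¹ * frobNorm (V i)) := by ring
    have hsqS : ((Real.sqrt S)⁻¹) ^ 2 = S⁻¹ := by
      rw [← Real.sq_sqrt hS0.le]
      simp [Real.sq_sqrt hS0.le]
    calc ∑ i, (frobNorm (D i)) ^ 2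
        ≤ ∑ i, ((1 + ε) * ((Real.sqrt S)⁻¹ * frobNorm (V i))) ^ 2 := by
          refine Finset.sum_le_sum fun i _ => ?_
          exact pow_le_pow_left₀ (frobNorm_nonneg' _) (hDi i) 2
      _ = (1 + ε)^2 * (((Real.sqrt S)⁻¹)^2 * ∑ i, (frobNorm (V i))^2) := by
          simp only [mul_pow, Finset.mul_sum]
      _ = (1 + ε)^2 := by
          rw [hsqS, ← hS, inv_mul_cancel₀ hS0.ne', mul_one]
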